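/- arXiv:1906.02153 — 3 statements merged into one kernel-verified Lean document; each statement's English description precedes it below -/
import Mathlib

section
/- Let S ⊂ ℝ² be a bounded measurable set with finite perimeter, let η be a unit vector, let l > 0, and let W(t) = √2 cos t. Then |∫_S W²(x·η / l) dx − |S|| ≤ C·H¹(∂S)·l for a universal constant C, under the assumption that the symmetric difference of S and any translate S + tη has measure at most H¹(∂S)·|t|. -/
/-!
Since `W(s)² = 1 + cos 2s`, the quantity to bound is `∫_S f` with `f(x) = cos(2 x·η / l)`. Now `f`
changes sign under the translation by `v = (π l / 2) η`, so `2 ∫_S f = ∫_S f - ∫_{S + v} f`, and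
this difference only sees `S △ (S + v)`, whose measure is at most `H¹(∂S) · π l / 2`.
-/

open MeasureTheory Real
open scoped RealInnerProductSpace symmDiff

section SetIntegral

variable {α E : Type*} [MeasurableSpace α] {μ : Measure α}
  [NormedAddCommGroup E] [NormedSpace ℝ E]

theorem norm_setIntegral_sub_setIntegral_le {f : α → E} {s t : Set α} {M : ℝ}
    (hs : MeasurableSet s) (ht : MeasurableSet t)
    (hfs : IntegrableOn f s μ) (hft : IntegrableOn f t μ) (hst : μ (s ∆ t) ≠ ⊤)
    (hM : ∀ x ∈ s ∆ t, ‖f x‖ ≤ M) :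
    ‖∫ x in s, f x ∂μ - ∫ x in t, f x ∂μ‖ ≤ M * μ.real (s ∆ t) := by
  have hsplit : μ (s ∆ t) = μ (s \ t) + μ (t \ s) :=
    measure_symmDiff_eq hs.nullMeasurableSet ht.nullMeasurableSet
  have hst' : μ (s \ t) ≠ ⊤ ∧ μ (t \ s) ≠ ⊤ := by rwa [hsplit, ENNReal.add_ne_top] at hst
  have hdiff : ∫ x in s, f x ∂μ - ∫ x in t, f x ∂μ
      = ∫ x in s \ t, f x ∂μ - ∫ x in t \ s, f x ∂μ := by
    rw [← integral_inter_add_sdiff ht hfs, ← integral_inter_add_sdiff hs hft, Set.inter_comm]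
    abel
  calc ‖∫ x in s, f x ∂μ - ∫ x in t, f x ∂μ‖
      ≤ ‖∫ x in s \ t, f x ∂μ‖ + ‖∫ x in t \ s, f x ∂μ‖ := hdiff ▸ norm_sub_le _ _
    _ ≤ M * μ.real (s \ t) + M * μ.real (t \ s) := by
      gcongr
      · exact norm_setIntegral_le_of_norm_le_const hst'.1.lt_top
          fun x hx => hM x (Or.inl hx)
      · exact norm_setIntegral_le_of_norm_le_const hst'.2.lt_top
          fun x hx => hM x (Or.inr hx)
    _ = M * μ.real (s ∆ t) := by
      rw [← mul_add, measureReal_def, measureReal_def, measureReal_def, hsplit,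
        ENNReal.toReal_add hst'.1 hst'.2]

end SetIntegral

section Antiperiodic

variable {G E : Type*} [MeasurableSpace G] [AddGroup G] [MeasurableAdd G] {μ : Measure G}
  [μ.IsAddRightInvariant] [NormedAddCommGroup E] [NormedSpace ℝ E]

theorem measure_image_add_right (v : G) (s : Set G) : μ ((· + v) '' s) = μ s := by
  rw [Set.image_add_right, measure_preimage_add_right]

theorem Function.Antiperiodic.setIntegral_image_add_right {f : G → E} {v : G}
    (hf : Function.Antiperiodic f v) (s : Set G) :
    ∫ x in (· + v) '' s, f x ∂μ = -∫ x in s, f x ∂μ := by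
  rw [(measurePreserving_add_right μ v).setIntegral_image_emb
    (MeasurableEquiv.addRight v).measurableEmbedding, ← integral_neg]
  exact congrArg _ (funext hf)

theorem Function.Antiperiodic.two_mul_norm_setIntegral_le {f : G → E} {v : G} {M : ℝ}
    (hf : Function.Antiperiodic f v) (hfm : AEStronglyMeasurable f μ) (hM : ∀ x, ‖f x‖ ≤ M)
    {s : Set G} (hs : MeasurableSet s) (hμs : μ s ≠ ⊤) :
    2 * ‖∫ x in s, f x ∂μ‖ ≤ M * μ.real (s ∆ ((· + v) '' s)) := by
  have hμs' : μ ((· + v) '' s) ≠ ⊤ := by rwa [measure_image_add_right]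
  have hs' : MeasurableSet ((· + v) '' s) :=
    (MeasurableEquiv.addRight v).measurableEmbedding.measurableSet_image.2 hs
  have hbdd : ∀ t : Set G, ∀ᵐ x ∂μ.restrict t, ‖f x‖ ≤ M := fun t => .of_forall hM
  have key := norm_setIntegral_sub_setIntegral_le hs hs'
    (Measure.integrableOn_of_bounded hμs hfm (hbdd _))
    (Measure.integrableOn_of_bounded hμs' hfm (hbdd _))
    (measure_symmDiff_ne_top hμs hμs') fun x _ => hM x
  rwa [hf.setIntegral_image_add_right, sub_neg_eq_add, ← two_smul ℝ, norm_smul,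
    Real.norm_two] at key

end Antiperiodic

theorem sq_sqrt_two_mul_cos (θ : ℝ) : (√2 * cos θ) ^ 2 = 1 + cos (2 * θ) := by
  rw [mul_pow, sq_sqrt zero_le_two, cos_sq]
  ring

theorem antiperiodic_cos_two_mul_inner_div {F : Type*} [NormedAddCommGroup F]
    [InnerProductSpace ℝ F] {η : F} (hη : ‖η‖ = 1) {l : ℝ} (hl : l ≠ 0) :
    Function.Antiperiodic (fun x : F => cos (2 * ⟪x, η⟫ / l)) ((π * l / 2) • η) := by
  intro x
  have harg : 2 * ⟪x + (π * l / 2) • η, η⟫ / l = 2 * ⟪x, η⟫ / l + π := by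
    rw [inner_add_left, real_inner_smul_left, real_inner_self_eq_norm_sq, hη]
    field_simp
  simp only [harg, cos_antiperiodic _]

/-- for bounded measurable S ⊂ ℝ² of finite perimeter, a unit vector η and l > 0,
assuming |S △ (S + tη)| ≤ H¹(∂S)·t for all t > 0, one has
|∫_S W²(x·η/l) dx − |S|| ≤ C·H¹(∂S)·l with a universal constant C, where W(t) = √2 cos t. -/
theorem stmt3 :
    ∃ C : ℝ, 0 < C ∧
      ∀ (S : Set (EuclideanSpace ℝ (Fin 2))) (η : EuclideanSpace ℝ (Fin 2)) (l : ℝ),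
        MeasurableSet S → Bornology.IsBounded S → ‖η‖ = 1 → 0 < l →
        μH[1] (frontier S) ≠ ⊤ →
        (∀ t : ℝ, 0 < t →
            volume (symmDiff S ((fun x => x + t • η) '' S))
              ≤ μH[1] (frontier S) * ENNReal.ofReal t) →
        |(∫ x in S, (Real.sqrt 2 * Real.cos ((inner ℝ x η : ℝ) / l)) ^ 2)
            - (volume S).toReal|
          ≤ C * (μH[1] (frontier S)).toReal * l := by
  refine ⟨π / 4, by positivity, fun S η l hS hSb hη hl hH htrans => ?_⟩
  have hμS : volume S ≠ ⊤ := hSb.measure_lt_top.ne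
  have hcos_le (x : EuclideanSpace ℝ (Fin 2)) : ‖cos (2 * ⟪x, η⟫ / l)‖ ≤ 1 :=
    (norm_eq_abs _).trans_le (abs_cos_le_one _)
  have hsplit : ∫ x in S, (√2 * cos (⟪x, η⟫ / l)) ^ 2
      = (volume S).toReal + ∫ x in S, cos (2 * ⟪x, η⟫ / l) := by
    simp_rw [sq_sqrt_two_mul_cos, ← mul_div_assoc]
    rw [integral_add (integrableOn_const (C := (1 : ℝ)) hμS)
      (Measure.integrableOn_of_bounded hμS (by fun_prop) (.of_forall hcos_le))]
    simp [Measure.real]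
  have hbound : 2 * ‖∫ x in S, cos (2 * ⟪x, η⟫ / l)‖
      ≤ (μH[1] (frontier S)).toReal * (π * l / 2) :=
    calc _ ≤ 1 * volume.real (S ∆ ((· + (π * l / 2) • η) '' S)) :=
          (antiperiodic_cos_two_mul_inner_div hη hl.ne').two_mul_norm_setIntegral_le
            (by fun_prop) hcos_le hS hμS
      _ = volume.real (S ∆ ((· + (π * l / 2) • η) '' S)) := one_mul _
      _ ≤ _ := by
          have h := ENNReal.toReal_mono (ENNReal.mul_ne_top hH ENNReal.ofReal_ne_top)
            (htrans (π * l / 2) (by positivity))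
          rwa [ENNReal.toReal_mul, ENNReal.toReal_ofReal (by positivity), ← measureReal_def] at h
  rw [hsplit, add_sub_cancel_left, ← norm_eq_abs]
  linarith
end

section
/- Let E = {(x₁,x₂) : x₁²/a² + x₂²/b² < 1} with 0 < b < a. The function φ₊(x) = (1/2)(b² + (1 − b²/a²)x₁²) on E, extended by (1/2)|x|² outside E, is convex on ℝ², and any convex function φ on ℝ² equal to (1/2)|x|² on ℝ² \ E satisfies φ ≤ φ₊ on E. -/
open Classical

/-- The open ellipse with semi-axes a, b. -/
def Eell (a b : ℝ) : Set (ℝ × ℝ) := {p | p.1 ^ 2 / a ^ 2 + p.2 ^ 2 / b ^ 2 < 1}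

/-- The candidate largest convex extension φ₊ for the ellipse. -/
noncomputable def phiPlusEll (a b : ℝ) : ℝ × ℝ → ℝ := fun p =>
  if p ∈ Eell a b then (1 / 2) * (b ^ 2 + (1 - b ^ 2 / a ^ 2) * p.1 ^ 2)
  else (1 / 2) * (p.1 ^ 2 + p.2 ^ 2)

open Set

lemma mem_Eell_iff {a b : ℝ} (hb : b ≠ 0) {p : ℝ × ℝ} :
    p ∈ Eell a b ↔ p.2 ^ 2 < b ^ 2 * (1 - p.1 ^ 2 / a ^ 2) := by
  rw [Eell, mem_ofPred_eq, ← lt_sub_iff_add_lt', div_lt_iff₀' (by positivity)]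

lemma convexOn_univ_fst_sq : ConvexOn ℝ univ (fun p : ℝ × ℝ => p.1 ^ 2) := by
  exact (Even.convexOn_pow even_two).comp_linearMap (LinearMap.fst ℝ ℝ ℝ)

lemma convexOn_univ_snd_sq : ConvexOn ℝ univ (fun p : ℝ × ℝ => p.2 ^ 2) := by
  exact (Even.convexOn_pow even_two).comp_linearMap (LinearMap.snd ℝ ℝ ℝ)

/-- The quadratic piece of `phiPlusEll` exceeds `½|p|²` by `½ (b² (1 - p₁²/a²) - p₂²)`, which is
positive exactly on the ellipse. -/
lemma phiPlusEll_eq_sup {a b : ℝ} (hb : b ≠ 0) :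
    phiPlusEll a b = (fun p : ℝ × ℝ => (1 / 2) * (p.1 ^ 2 + p.2 ^ 2)) ⊔
      (fun p : ℝ × ℝ => (1 / 2) * (b ^ 2 + (1 - b ^ 2 / a ^ 2) * p.1 ^ 2)) := by
  funext p
  have hgap : (1 / 2) * (b ^ 2 + (1 - b ^ 2 / a ^ 2) * p.1 ^ 2) - (1 / 2) * (p.1 ^ 2 + p.2 ^ 2)
      = (1 / 2) * (b ^ 2 * (1 - p.1 ^ 2 / a ^ 2) - p.2 ^ 2) := by ring
  simp only [phiPlusEll, Pi.sup_apply, mem_Eell_iff hb]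
  split_ifs with hp
  · exact (max_eq_right (by linarith)).symm
  · exact (max_eq_left (by linarith [not_lt.1 hp])).symm

lemma convexOn_phiPlusEll {a b : ℝ} (hb : b ≠ 0) (hab : b ^ 2 ≤ a ^ 2) :
    ConvexOn ℝ univ (phiPlusEll a b) := by
  have hc : 0 ≤ 1 - b ^ 2 / a ^ 2 := sub_nonneg.2 (div_le_one_of_le₀ hab (sq_nonneg a))
  rw [phiPlusEll_eq_sup hb]
  refine ConvexOn.sup ?_ ?_
  · exact (convexOn_univ_fst_sq.add convexOn_univ_snd_sq).smul (by norm_num)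
  · exact ((convexOn_const _ convex_univ).add (convexOn_univ_fst_sq.smul hc)).smul (by norm_num)

lemma ConvexOn.le_max_of_abs_snd_le {φ : ℝ × ℝ → ℝ} (hφ : ConvexOn ℝ univ φ) {p : ℝ × ℝ} {t : ℝ}
    (ht : |p.2| ≤ t) : φ p ≤ max (φ (p.1, -t)) (φ (p.1, t)) := by
  refine hφ.le_on_segment (mem_univ _) (mem_univ _) ?_
  rw [← Prod.image_mk_segment_right, segment_eq_Icc (by linarith [abs_nonneg p.2])]
  exact ⟨p.2, abs_le.1 ht, rfl⟩

/-- Convexity along the vertical chord through `p`, whose endpoints `(p₁, ±t)` lie on the boundary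
of the ellipse, where `φ = ½|x|² = φ₊(p)`. -/
lemma le_phiPlusEll {a b : ℝ} (hb : b ≠ 0) {φ : ℝ × ℝ → ℝ} (hφ : ConvexOn ℝ univ φ)
    (hout : ∀ p ∉ Eell a b, φ p = (1 / 2) * (p.1 ^ 2 + p.2 ^ 2)) {p : ℝ × ℝ} (hp : p ∈ Eell a b) :
    φ p ≤ phiPlusEll a b p := by
  rw [mem_Eell_iff hb] at hp
  set t := √(b ^ 2 * (1 - p.1 ^ 2 / a ^ 2))
  have ht : t ^ 2 = b ^ 2 * (1 - p.1 ^ 2 / a ^ 2) := Real.sq_sqrt (by nlinarith [sq_nonneg p.2])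
  have hend : ∀ s, s ^ 2 = t ^ 2 → φ (p.1, s) = phiPlusEll a b p := by
    intro s hs
    rw [hout _ (by rw [mem_Eell_iff hb, hs, ht]; exact lt_irrefl _), phiPlusEll,
      if_pos ((mem_Eell_iff hb).2 hp), hs, ht]
    ring
  calc φ p ≤ max (φ (p.1, -t)) (φ (p.1, t)) := hφ.le_max_of_abs_snd_le (Real.abs_le_sqrt hp.le)
    _ = phiPlusEll a b p := by rw [hend _ (neg_sq t), hend t rfl, max_self]

/-- φ₊ is convex on ℝ², and every convex φ equal to (1/2)|x|² off the ellipse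
satisfies φ ≤ φ₊ on the ellipse. -/
theorem stmt8 (a b : ℝ) (hb : 0 < b) (hba : b < a) :
    ConvexOn ℝ Set.univ (phiPlusEll a b) ∧
    ∀ φ : ℝ × ℝ → ℝ, ConvexOn ℝ Set.univ φ →
      (∀ p ∉ Eell a b, φ p = (1 / 2) * (p.1 ^ 2 + p.2 ^ 2)) →
      ∀ p ∈ Eell a b, φ p ≤ phiPlusEll a b p :=
  ⟨convexOn_phiPlusEll hb.ne' (pow_le_pow_left₀ hb.le hba.le 2),
    fun _ hφ hout _ hp => le_phiPlusEll hb.ne' hφ hout hp⟩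
end

section
/- Let Ω ⊂ ℝ² be open and bounded, and let φ₊(x) = sup{φ(x) : φ convex on ℝ², φ = (1/2)|·|² on ℝ² \ Ω}. Then for x ∈ Ω, φ₊(x) equals the infimum of Σᵢ θᵢ (1/2)|yᵢ|² over all representations x = Σᵢ θᵢ yᵢ as a convex combination of at most three points yᵢ ∈ ℝ² \ Ω. -/
/-!
Write `ψ(x)` for the infimum on the right. Jensen's inequality puts every admissible `φ` below
every combination `∑ θᵢ ½|yᵢ|²`, so `φ₊ ≤ ψ`. Conversely `ψ` is itself admissible. Off `Ω` it
equals `½|·|²`, since that function is convex. And `ψ` is convex: combining representations of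
two points gives a representation of their convex combination by six points. Carathéodory's
argument brings this back to three points without increasing the value. Shift the weights along
an affine dependence of the lifted points `(yᵢ, 1) ∈ ℝ² × ℝ`, with its sign chosen so that
`∑ θᵢ ½|yᵢ|²` does not increase, until one weight vanishes. Boundedness of `Ω` makes every point
the midpoint of two points outside `Ω`, so every infimum is over a nonempty set.
-/

open Set Module
open scoped Pointwise

theorem Fin.sum_succAbove_of_eq_zero {M : Type*} [AddCommMonoid M] {m : ℕ}
    {g : Fin (m + 1) → M} {j : Fin (m + 1)} (hj : g j = 0) :
    ∑ i, g (j.succAbove i) = ∑ i, g i := by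
  rw [Fin.sum_univ_succAbove g j, hj, zero_add]

theorem exists_nonneg_add_mul_eq_zero {ι : Type*} [Fintype ι] {θ c : ι → ℝ}
    (hθ : ∀ i, 0 ≤ θ i) (hc : ∃ i, c i < 0) :
    ∃ t : ℝ, 0 ≤ t ∧ (∀ i, 0 ≤ θ i + t * c i) ∧ ∃ j, θ j + t * c j = 0 := by
  classical
  obtain ⟨j, hj, hmin⟩ := Finset.exists_min_image (Finset.univ.filter fun i => c i < 0)
    (fun i => θ i / -c i) (by simpa [Finset.Nonempty] using hc)
  have hcj : c j < 0 := by simpa using hj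
  have ht : 0 ≤ θ j / -c j := div_nonneg (hθ j) (by linarith)
  refine ⟨θ j / -c j, ht, fun i => ?_, j, by field_simp [hcj.ne]; ring⟩
  rcases lt_or_ge (c i) 0 with hci | hci
  · have := (le_div_iff₀ (neg_pos.2 hci)).1 (hmin i (by simpa using hci))
    linarith
  · exact add_nonneg (hθ i) (mul_nonneg ht hci)

variable {E : Type*} [AddCommGroup E] [Module ℝ E]

theorem exists_affine_relation_sum_mul_nonpos [FiniteDimensional ℝ E] {ι : Type*}
    [Fintype ι] (hι : finrank ℝ E + 1 < Fintype.card ι) (y : ι → E) (g : ι → ℝ) :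
    ∃ c : ι → ℝ, ∑ i, c i • y i = 0 ∧ ∑ i, c i = 0 ∧ ∑ i, c i * g i ≤ 0 ∧ ∃ i, c i < 0 := by
  have hdep : ¬LinearIndependent ℝ fun i => (y i, (1 : ℝ)) := fun h => by
    have := h.fintype_card_le_finrank
    rw [finrank_prod, finrank_self] at this
    omega
  obtain ⟨c, hc, i₀, hi₀⟩ := Fintype.not_linearIndependent_iff.1 hdep
  have hy : ∑ i, c i • y i = 0 := by simpa [Prod.fst_sum] using congrArg Prod.fst hc
  have hs : ∑ i, c i = 0 := by simpa [Prod.snd_sum] using congrArg Prod.snd hc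
  have hneg : ∀ c : ι → ℝ, ∑ i, c i = 0 → c ≠ 0 → ∃ i, c i < 0 := fun c hs hc => by
    by_contra! h
    exact hc ((Fintype.sum_eq_zero_iff_of_nonneg h).1 hs)
  have hc0 : c ≠ 0 := fun h => hi₀ (by simp [h])
  rcases le_total (∑ i, c i * g i) 0 with hg | hg
  · exact ⟨c, hy, hs, hg, hneg c hs hc0⟩
  · exact ⟨-c, by simp [hy], by simp [hs], by simpa using hg,
      hneg (-c) (by simp [hs]) (neg_ne_zero.2 hc0)⟩

def convexCombinationValues (s : Set E) (f : E → ℝ) (m : ℕ) (x : E) : Set ℝ :=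
  {v | ∃ (y : Fin m → E) (θ : Fin m → ℝ), (∀ i, y i ∈ s) ∧ (∀ i, 0 ≤ θ i) ∧ ∑ i, θ i = 1 ∧
    ∑ i, θ i • y i = x ∧ v = ∑ i, θ i * f (y i)}

variable {s : Set E} {f : E → ℝ} {x : E} {v : ℝ}

theorem exists_le_of_mem_convexCombinationValues_succ [FiniteDimensional ℝ E] {m : ℕ}
    (hm : finrank ℝ E + 1 < m + 1) (hv : v ∈ convexCombinationValues s f (m + 1) x) :
    ∃ v' ∈ convexCombinationValues s f m x, v' ≤ v := by
  obtain ⟨y, θ, hys, hθ, hθ1, hθx, rfl⟩ := hv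
  obtain ⟨c, hcy, hc1, hcf, hc⟩ :=
    exists_affine_relation_sum_mul_nonpos (by simpa using hm) y (fun i => f (y i))
  obtain ⟨t, ht, hθ', j, hj⟩ := exists_nonneg_add_mul_eq_zero hθ hc
  set θ' : Fin (m + 1) → ℝ := fun i => θ i + t * c i
  have hj' : θ' j = 0 := hj
  have hθ'1 : ∑ i, θ' i = 1 := by
    simp only [θ', Finset.sum_add_distrib, ← Finset.mul_sum, hθ1, hc1, mul_zero, add_zero]
  have hθ'x : ∑ i, θ' i • y i = x := by
    simp only [θ', add_smul, Finset.sum_add_distrib, mul_smul, ← Finset.smul_sum, hcy, hθx,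
      smul_zero, add_zero]
  have hθ'f : ∑ i, θ' i * f (y i) ≤ ∑ i, θ i * f (y i) := by
    simp only [θ', add_mul, Finset.sum_add_distrib, mul_assoc, ← Finset.mul_sum]
    nlinarith [mul_nonpos_of_nonneg_of_nonpos ht hcf]
  refine ⟨_, ⟨y ∘ j.succAbove, θ' ∘ j.succAbove, fun i => hys _, fun i => hθ' _, ?_, ?_, rfl⟩,
    ?_⟩
  · rwa [← Fin.sum_succAbove_of_eq_zero hj'] at hθ'1
  · rwa [← Fin.sum_succAbove_of_eq_zero (j := j) (g := fun i => θ' i • y i) (by simp [hj'])]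
      at hθ'x
  · rwa [← Fin.sum_succAbove_of_eq_zero (j := j) (g := fun i => θ' i * f (y i))
      (by simp [hj'])] at hθ'f

theorem exists_le_of_mem_convexCombinationValues [FiniteDimensional ℝ E] {m k : ℕ}
    (hm : finrank ℝ E + 1 ≤ m) (hmk : m ≤ k) (hv : v ∈ convexCombinationValues s f k x) :
    ∃ v' ∈ convexCombinationValues s f m x, v' ≤ v := by
  induction k, hmk using Nat.le_induction generalizing v with
  | base => exact ⟨v, hv, le_rfl⟩
  | succ k hmk ih =>
    obtain ⟨w, hw, hwv⟩ := exists_le_of_mem_convexCombinationValues_succ (by omega) hv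
    obtain ⟨v', hv', hv'w⟩ := ih hw
    exact ⟨v', hv', hv'w.trans hwv⟩

theorem smul_add_smul_subset_convexCombinationValues {m k : ℕ} {z₁ z₂ : E} {a b : ℝ}
    (ha : 0 ≤ a) (hb : 0 ≤ b) (hab : a + b = 1) :
    a • convexCombinationValues s f m z₁ + b • convexCombinationValues s f k z₂ ⊆
      convexCombinationValues s f (m + k) (a • z₁ + b • z₂) := by
  rintro _ ⟨_, ⟨_, ⟨y₁, θ₁, hy₁, hθ₁, hθ₁1, hθ₁z, rfl⟩, rfl⟩, _,
    ⟨_, ⟨y₂, θ₂, hy₂, hθ₂, hθ₂1, hθ₂z, rfl⟩, rfl⟩, rfl⟩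
  refine ⟨Fin.append y₁ y₂, Fin.append (a • θ₁) (b • θ₂), fun i => ?_, fun i => ?_, ?_, ?_, ?_⟩
  · exact Fin.addCases (fun i => by simpa using hy₁ i) (fun i => by simpa using hy₂ i) i
  · exact Fin.addCases (fun i => by simpa using mul_nonneg ha (hθ₁ i))
      (fun i => by simpa using mul_nonneg hb (hθ₂ i)) i
  · simp only [Fin.sum_univ_add, Fin.append_left, Fin.append_right, Pi.smul_apply, smul_eq_mul,
      ← Finset.mul_sum, hθ₁1, hθ₂1, mul_one, hab]
  · simp only [Fin.sum_univ_add, Fin.append_left, Fin.append_right, Pi.smul_apply, smul_eq_mul,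
      mul_smul, ← Finset.smul_sum, hθ₁z, hθ₂z]
  · simp only [Fin.sum_univ_add, Fin.append_left, Fin.append_right, Pi.smul_apply, smul_eq_mul,
      mul_assoc, ← Finset.mul_sum]

theorem ConvexOn.le_of_mem_convexCombinationValues {m : ℕ} {φ : E → ℝ}
    (hφ : ConvexOn ℝ univ φ) (hφf : ∀ y ∈ s, φ y ≤ f y)
    (hv : v ∈ convexCombinationValues s f m x) : φ x ≤ v := by
  obtain ⟨y, θ, hys, hθ, hθ1, rfl, rfl⟩ := hv
  calc φ (∑ i, θ i • y i) ≤ ∑ i, θ i • φ (y i) :=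
        hφ.map_sum_le (fun i _ => hθ i) hθ1 (fun i _ => mem_univ _)
    _ ≤ ∑ i, θ i * f (y i) :=
        Finset.sum_le_sum fun i _ => mul_le_mul_of_nonneg_left (hφf _ (hys i)) (hθ i)

theorem ConvexOn.bddBelow_convexCombinationValues {m : ℕ} (hf : ConvexOn ℝ univ f) :
    BddBelow (convexCombinationValues s f m x) :=
  ⟨f x, fun _ hv => hf.le_of_mem_convexCombinationValues (fun _ _ => le_rfl) hv⟩

noncomputable def convexCombinationEnvelope (s : Set E) (f : E → ℝ) (m : ℕ) (x : E) : ℝ :=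
  sInf (convexCombinationValues s f m x)

theorem ConvexOn.convexCombinationEnvelope_eq_of_mem {m : ℕ} (hf : ConvexOn ℝ univ f)
    (hx : x ∈ s) : convexCombinationEnvelope s f (m + 1) x = f x := by
  refine IsLeast.csInf_eq ⟨⟨fun _ => x, Pi.single 0 1, fun _ => hx,
    fun i => by by_cases h : i = 0 <;> simp [h], by simp, by simp, by simp [← Finset.sum_mul]⟩,
    fun _ hv => hf.le_of_mem_convexCombinationValues (fun _ _ => le_rfl) hv⟩

theorem ConvexOn.le_convexCombinationEnvelope {m : ℕ} {φ : E → ℝ} (hφ : ConvexOn ℝ univ φ)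
    (hφf : ∀ y ∈ s, φ y ≤ f y) (hne : (convexCombinationValues s f m x).Nonempty) :
    φ x ≤ convexCombinationEnvelope s f m x :=
  le_csInf hne fun _ hv => hφ.le_of_mem_convexCombinationValues hφf hv

theorem ConvexOn.convexOn_convexCombinationEnvelope [FiniteDimensional ℝ E] {m : ℕ}
    (hf : ConvexOn ℝ univ f) (hm : finrank ℝ E + 1 ≤ m)
    (hne : ∀ z, (convexCombinationValues s f m z).Nonempty) :
    ConvexOn ℝ univ (convexCombinationEnvelope s f m) := by
  refine ⟨convex_univ, fun z₁ _ z₂ _ a b ha hb hab => ?_⟩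
  set T := convexCombinationValues s f m
  have hbdd : ∀ z, BddBelow (T z) := fun _ => hf.bddBelow_convexCombinationValues
  calc convexCombinationEnvelope s f m (a • z₁ + b • z₂) ≤ sInf (a • T z₁ + b • T z₂) := by
        refine le_csInf ((hne z₁).smul_set.add (hne z₂).smul_set) fun v hv => ?_
        obtain ⟨v', hv', hle⟩ := exists_le_of_mem_convexCombinationValues hm le_add_self
          (smul_add_smul_subset_convexCombinationValues ha hb hab hv)
        exact (csInf_le (hbdd _) hv').trans hle
    _ = a • convexCombinationEnvelope s f m z₁ + b • convexCombinationEnvelope s f m z₂ := by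
        rw [csInf_add (hne z₁).smul_set ((hbdd z₁).smul_of_nonneg ha) (hne z₂).smul_set
          ((hbdd z₂).smul_of_nonneg hb), Real.sInf_smul_of_nonneg ha,
          Real.sInf_smul_of_nonneg hb]
        rfl

theorem Bornology.IsBounded.exists_add_notMem_and_sub_notMem {F : Type*}
    [NormedAddCommGroup F] [NormedSpace ℝ F] [Nontrivial F] {Ω : Set F}
    (hΩ : Bornology.IsBounded Ω) (x : F) : ∃ u, x + u ∉ Ω ∧ x - u ∉ Ω := by
  obtain ⟨r, hr⟩ := hΩ.subset_closedBall x
  obtain ⟨u, hu⟩ := exists_norm_eq F (by positivity : 0 ≤ |r| + 1)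
  have hfar : r < ‖u‖ := by rw [hu]; linarith [le_abs_self r]
  exact ⟨u, fun h => hfar.not_ge (by simpa using hr h), fun h => hfar.not_ge (by simpa using hr h)⟩

theorem Bornology.IsBounded.convexCombinationValues_compl_nonempty {F : Type*}
    [NormedAddCommGroup F] [NormedSpace ℝ F] [Nontrivial F] {Ω : Set F}
    (hΩ : Bornology.IsBounded Ω) (f : F → ℝ) (m : ℕ) (x : F) :
    (convexCombinationValues Ωᶜ f (m + 2) x).Nonempty := by
  obtain ⟨u, hu₁, hu₂⟩ := hΩ.exists_add_notMem_and_sub_notMem x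
  refine ⟨_, Fin.cons (x + u) (Fin.cons (x - u) fun _ => x - u),
    Fin.cons (1 / 2) (Fin.cons (1 / 2) 0), fun i => ?_, fun i => ?_, ?_, ?_, rfl⟩
  · exact Fin.cases (by simpa using hu₁)
      (Fin.cases (by simpa using hu₂) fun _ => by simpa using hu₂) i
  · exact Fin.cases (by norm_num) (Fin.cases (by norm_num) fun _ => le_rfl) i
  · simp [Fin.sum_univ_succ]; norm_num
  · simp [Fin.sum_univ_succ]; module

theorem stmt10_general (Ω : Set (EuclideanSpace ℝ (Fin 2)))
    (hΩb : Bornology.IsBounded Ω) :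
    ∀ x ∈ Ω,
      sSup {v : ℝ | ∃ φ : EuclideanSpace ℝ (Fin 2) → ℝ, ConvexOn ℝ Set.univ φ ∧
          (∀ y ∉ Ω, φ y = (1 / 2) * ‖y‖ ^ 2) ∧ v = φ x}
        = sInf {v : ℝ | ∃ (y : Fin 3 → EuclideanSpace ℝ (Fin 2)) (θ : Fin 3 → ℝ),
            (∀ i, y i ∉ Ω) ∧ (∀ i, 0 ≤ θ i) ∧ (∑ i, θ i) = 1 ∧ (∑ i, θ i • y i) = x ∧
            v = ∑ i, θ i * ((1 / 2) * ‖y i‖ ^ 2)} := by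
  intro x _
  set f : EuclideanSpace ℝ (Fin 2) → ℝ := fun y => (1 / 2) * ‖y‖ ^ 2
  have hf : ConvexOn ℝ univ f := by
    simpa [f, smul_eq_mul] using
      (convexOn_univ_norm.pow (fun _ _ => norm_nonneg _) 2).smul
        (by norm_num : (0 : ℝ) ≤ 1 / 2)
  have hne := hΩb.convexCombinationValues_compl_nonempty f 1
  have hdim : finrank ℝ (EuclideanSpace ℝ (Fin 2)) + 1 ≤ 1 + 2 := by simp
  change sSup _ = convexCombinationEnvelope Ωᶜ f (1 + 2) x
  refine IsGreatest.csSup_eq ⟨⟨_, hf.convexOn_convexCombinationEnvelope hdim hne,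
    fun y hy => hf.convexCombinationEnvelope_eq_of_mem hy, rfl⟩, ?_⟩
  rintro _ ⟨φ, hφ, hφΩ, rfl⟩
  exact hφ.le_convexCombinationEnvelope (fun y hy => (hφΩ y hy).le) (hne x)

/-- for x ∈ Ω, the pointwise supremum φ₊(x) over all convex functions agreeing
with (1/2)|x|² off Ω equals the infimum of Σ θᵢ(1/2)|yᵢ|² over representations of x as a
convex combination of at most three points yᵢ ∉ Ω. -/
theorem stmt10 (Ω : Set (EuclideanSpace ℝ (Fin 2))) (hΩo : IsOpen Ω)
    (hΩb : Bornology.IsBounded Ω) :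
    ∀ x ∈ Ω,
      sSup {v : ℝ | ∃ φ : EuclideanSpace ℝ (Fin 2) → ℝ, ConvexOn ℝ Set.univ φ ∧
          (∀ y ∉ Ω, φ y = (1 / 2) * ‖y‖ ^ 2) ∧ v = φ x}
        = sInf {v : ℝ | ∃ (y : Fin 3 → EuclideanSpace ℝ (Fin 2)) (θ : Fin 3 → ℝ),
            (∀ i, y i ∉ Ω) ∧ (∀ i, 0 ≤ θ i) ∧ (∑ i, θ i) = 1 ∧ (∑ i, θ i • y i) = x ∧
            v = ∑ i, θ i * ((1 / 2) * ‖y i‖ ^ 2)} :=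
  stmt10_general Ω hΩb
end
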